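/- Let τ be a nonempty finite type, n : ℕ, and r : List τ → ℝ. Suppose V : List τ → ℝ satisfies the local max constraint and the boundary condition for r, and let y* be a list over τ of length n such that r y* ≥ r y for every list y over τ of length n. Then for every i ≤ n, V (y*.take i) = max over all lists y over τ of length n of r y; that is, every prefix of an optimal full sequence attains the globally maximal reward as its value. -/

import Mathlib

/-- `V` satisfies the local max constraint: for every list `s` over `τ` with
`s.length < n`, `V s` equals the maximum over tokens `t : τ` of `V (s ++ [t])`. -/
def LocalMaxConstraint {τ : Type*} [Fintype τ] [Nonempty τ] (n : ℕ) (V : List τ → ℝ) : Prop :=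
  ∀ s : List τ, s.length < n →
    V s = Finset.univ.sup' Finset.univ_nonempty (fun t : τ => V (s ++ [t]))

/-- `V` satisfies the boundary condition for `r`: `V y = r y` for every
full sequence `y` (list of length `n`). -/
def BoundaryCondition {τ : Type*} (n : ℕ) (r V : List τ → ℝ) : Prop :=
  ∀ y : List τ, y.length = n → V y = r y

/-! By backward induction from the boundary, every value of a prefix is at most the best reward
`r y*`. Conversely the local max constraint makes `i ↦ V (y*.take i)` antitone, and at `i = n` it
equals `r y*`, so every prefix of `y*` attains the bound. -/

theorem Finset.sup'_univ_ofFn_eq_of_forall_le {τ α : Type*} [Fintype τ] [Nonempty τ]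
    [SemilatticeSup α] {n : ℕ} (r : List τ → α) (ystar : List τ) (hlen : ystar.length = n)
    (hopt : ∀ y : List τ, y.length = n → r y ≤ r ystar) :
    Finset.univ.sup' Finset.univ_nonempty (fun y : Fin n → τ => r (List.ofFn y)) = r ystar := by
  subst hlen
  refine le_antisymm (Finset.sup'_le _ _ fun y _ => hopt _ List.length_ofFn) ?_
  simpa only [List.ofFn_get] using
    Finset.le_sup' (fun y : Fin ystar.length → τ => r (List.ofFn y)) (Finset.mem_univ ystar.get)

namespace LocalMaxConstraint

variable {τ : Type*} [Fintype τ] [Nonempty τ] {n : ℕ} {V : List τ → ℝ}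

theorem append_singleton_le (hmax : LocalMaxConstraint n V) {s : List τ} (hs : s.length < n)
    (t : τ) : V (s ++ [t]) ≤ V s := by
  rw [hmax s hs]
  exact Finset.le_sup' (fun t : τ => V (s ++ [t])) (Finset.mem_univ t)

theorem antitone_take (hmax : LocalMaxConstraint n V) {l : List τ} (hl : l.length ≤ n) :
    Antitone fun i => V (l.take i) := by
  refine antitone_nat_of_succ_le fun i => ?_
  by_cases hi : i < l.length
  · rw [List.take_add_one, List.getElem?_eq_getElem hi, Option.toList_some]
    exact hmax.append_singleton_le (by rw [List.length_take]; omega) _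
  · rw [List.take_of_length_le (by omega), List.take_of_length_le (by omega)]

theorem le_of_boundary_le (hmax : LocalMaxConstraint n V) {r : List τ → ℝ}
    (hbd : BoundaryCondition n r V) {M : ℝ} (hM : ∀ y : List τ, y.length = n → r y ≤ M)
    {s : List τ} (hs : s.length ≤ n) : V s ≤ M := by
  obtain ⟨k, hk⟩ := Nat.exists_eq_add_of_le hs
  induction k generalizing s with
  | zero => exact (hbd s hk.symm).trans_le (hM s hk.symm)
  | succ k ih =>
    rw [hmax s (by omega)]
    refine Finset.sup'_le _ _ fun t _ => ih ?_ ?_ <;>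
      rw [List.length_append, List.length_singleton] <;> omega

end LocalMaxConstraint

/-- If `V` satisfies the local max constraint and the boundary condition for `r`, and
`y*` is an optimal full sequence, then every prefix `y*.take i` (`i ≤ n`) attains as its
value the globally maximal reward over all full sequences of length `n` (lists of
length `n` are enumerated as `List.ofFn y` for `y : Fin n → τ`). -/
theorem prefix_of_optimal_attains_max_reward {τ : Type*} [Fintype τ] [Nonempty τ]
    (n : ℕ) (r V : List τ → ℝ)
    (hmax : LocalMaxConstraint n V) (hbd : BoundaryCondition n r V)
    (ystar : List τ) (hlen : ystar.length = n)
    (hopt : ∀ y : List τ, y.length = n → r y ≤ r ystar) :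
    ∀ i ≤ n, V (ystar.take i) =
      Finset.univ.sup' Finset.univ_nonempty (fun y : Fin n → τ => r (List.ofFn y)) := by
  intro i hi
  rw [Finset.sup'_univ_ofFn_eq_of_forall_le r ystar hlen hopt]
  refine le_antisymm (hmax.le_of_boundary_le hbd hopt (by rw [List.length_take]; omega)) ?_
  calc r ystar = V (ystar.take n) := by rw [← hlen, List.take_length, hbd ystar hlen]
    _ ≤ V (ystar.take i) := hmax.antitone_take hlen.le hi
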